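/- arXiv:1706.05264 — 2 statements merged into one kernel-verified Lean document; each statement's English description precedes it below -/
import Mathlib

section
/- Let p be a probability distribution on k elements with non-increasingly ordered entries, let δ ≥ 0, and let p̄^(δ) be the steepest δ-approximation of p. Then for every probability distribution p' on k elements with ‖p − p'‖ ≤ δ, we have p̄^(δ) ≻ p'. -/
open Finset

noncomputable section

/-- The ℓ¹ distance `‖a − b‖ = Σᵢ |aᵢ − bᵢ|` between two vectors in `ℝ^k`. -/
def l1dist {k : ℕ} (a b : Fin k → ℝ) : ℝ := ∑ i, |a i - b i|

/-- A probability distribution on `k` elements: nonnegative entries summing to 1. -/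
def IsProbDist {k : ℕ} (p : Fin k → ℝ) : Prop := (∀ i, 0 ≤ p i) ∧ ∑ i, p i = 1

/-- The vector `a` rearranged in non-increasing order, `a↓`. -/
def descSort {k : ℕ} (a : Fin k → ℝ) : Fin k → ℝ := fun i => a (Tuple.sort a i.rev)

/-- The sum of the first `l` entries of `a` (1-based indexing: entries `1,…,l`). -/
def psum {k : ℕ} (a : Fin k → ℝ) (l : ℕ) : ℝ :=
  ∑ i ∈ univ.filter (fun i : Fin k => (i : ℕ) < l), a i

/-- The sum of the entries of `a` from position `l` to `k` (1-based indexing). -/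
def tailSum {k : ℕ} (a : Fin k → ℝ) (l : ℕ) : ℝ :=
  ∑ i ∈ univ.filter (fun i : Fin k => l ≤ (i : ℕ) + 1), a i

/-- `a` majorizes `b` (`a ≻ b`): the total sums agree and all partial sums of the
non-increasing rearrangements satisfy `Σ_{i=1}^l a↓ᵢ ≥ Σ_{i=1}^l b↓ᵢ` for `l = 1,…,k`. -/
def Majorizes {k : ℕ} (a b : Fin k → ℝ) : Prop :=
  (∑ i, a i = ∑ i, b i) ∧
  ∀ l : ℕ, 1 ≤ l → l ≤ k → psum (descSort b) l ≤ psum (descSort a) l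

/-- The distribution `e₁ = (1,0,…,0)`. -/
def e1 (k : ℕ) : Fin k → ℝ := fun i => if (i : ℕ) = 0 then 1 else 0

/-- The uniform distribution `η = (1/k,…,1/k)`. -/
def unif (k : ℕ) : Fin k → ℝ := fun _ => (k : ℝ)⁻¹

/-- The unnormalised vector `r` in the construction of the steepest approximation:
`r₁ = p₁ + δ/2`, `rᵢ = pᵢ` otherwise. -/
def steepR {k : ℕ} (δ : ℝ) (p : Fin k → ℝ) : Fin k → ℝ :=
  fun i => if (i : ℕ) = 0 then p i + δ / 2 else p i

/-- `lstar ∈ {1,…,k}` is the truncation index of the steepest `δ`-approximation of `p`: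
`Σ_{i=1}^{l*} rᵢ ≤ 1 < Σ_{i=1}^{l*+1} rᵢ` (the second sum being meaningful for `l* < k`). -/
def IsTruncIdx {k : ℕ} (δ : ℝ) (p : Fin k → ℝ) (lstar : ℕ) : Prop :=
  1 ≤ lstar ∧ lstar ≤ k ∧ psum (steepR δ p) lstar ≤ 1 ∧
    (lstar < k → 1 < psum (steepR δ p) (lstar + 1))

/-- `pbar` is the steepest `δ`-approximation `p̄^(δ)` of `p` (assumed non-increasingly
ordered): if `‖p − e₁‖ ≤ δ` then `pbar = e₁`; otherwise `pbar` agrees with `r` on the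
first `l*` entries, has `1 − Σ_{i=1}^{l*} rᵢ` at position `l*+1`, and `0` afterwards. -/
def IsSteepest {k : ℕ} (δ : ℝ) (p pbar : Fin k → ℝ) : Prop :=
  (l1dist p (e1 k) ≤ δ ∧ pbar = e1 k) ∨
  (δ < l1dist p (e1 k) ∧ ∃ lstar : ℕ, IsTruncIdx δ p lstar ∧
    ∀ i : Fin k, pbar i =
      if (i : ℕ) < lstar then steepR δ p i
      else if (i : ℕ) = lstar then 1 - psum (steepR δ p) lstar
      else 0)

/-- `ε(x) = Σ_{i : pᵢ ≥ x} (pᵢ − x)`. -/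
def epsFn {k : ℕ} (p : Fin k → ℝ) (x : ℝ) : ℝ :=
  ∑ i ∈ univ.filter (fun i : Fin k => x ≤ p i), (p i - x)

/-- `γ(y) = Σ_{i : pᵢ ≤ y} (y − pᵢ)`. -/
def gammaFn {k : ℕ} (p : Fin k → ℝ) (y : ℝ) : ℝ :=
  ∑ i ∈ univ.filter (fun i : Fin k => p i ≤ y), (y - p i)

/-- `pflat` is the flattest `δ`-approximation of `p` built from the cutting level `x*` and
the filling level `y*`: `x*, y* ∈ [0,1]`, `ε(x*) = γ(y*) = δ/2`, and `pflat` equals `x*`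
where `pᵢ ≥ x*`, equals `y*` where `pᵢ ≤ y*`, and equals `pᵢ` otherwise. -/
def IsFlattestWith {k : ℕ} (δ : ℝ) (p pflat : Fin k → ℝ) (x y : ℝ) : Prop :=
  x ∈ Set.Icc (0 : ℝ) 1 ∧ y ∈ Set.Icc (0 : ℝ) 1 ∧
  epsFn p x = δ / 2 ∧ gammaFn p y = δ / 2 ∧
  ∀ i : Fin k, pflat i = if x ≤ p i then x else if p i ≤ y then y else p i

/-- `pflat` is the flattest `δ`-approximation `p̲^(δ)` of `p` (assumed non-increasingly
ordered): if `‖p − η‖ ≤ δ` then `pflat = η`; otherwise it is obtained by cutting at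
level `x*` and filling at level `y*`. -/
def IsFlattest {k : ℕ} (δ : ℝ) (p pflat : Fin k → ℝ) : Prop :=
  (l1dist p (unif k) ≤ δ ∧ pflat = unif k) ∨
  (δ < l1dist p (unif k) ∧ ∃ x y : ℝ, IsFlattestWith δ p pflat x y)

end

/-
Moving mass `‖p − p'‖ ≤ δ` raises the total over any index set `S` by at most `δ/2`, since the
mass gained equals the mass lost; and for antitone `p` the `#S` largest entries are the first
ones. So every sum of `l` entries of `p'` is at most `min (Σ_{i<l} pᵢ + δ/2) 1`, which is the
`l`-th partial sum of the antitone vector `p̄^(δ)`. Majorization only needs such bounds over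
arbitrary `l`-element index sets, because the `l` largest entries of `p'` form one.
-/

section

variable {k : ℕ}

lemma descSort_eq_of_antitone {a : Fin k → ℝ} (ha : Antitone a) : descSort a = a := by
  have hmono : Monotone (a ∘ Fin.revPerm) := fun i j hij => ha (Fin.rev_le_rev.mpr hij)
  have hsort := (Tuple.comp_sort_eq_comp_iff_monotone (σ := Fin.revPerm)).mpr hmono
  funext i
  simpa [descSort] using congrFun hsort.symm i.rev

lemma exists_card_eq_psum_descSort_eq_sum (q : Fin k → ℝ) {l : ℕ} (hl : l ≤ k) :
    ∃ S : Finset (Fin k), #S = l ∧ psum (descSort q) l = ∑ i ∈ S, q i := by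
  set σ : Fin k → Fin k := fun i => Tuple.sort q i.rev
  have hσ : σ.Injective := fun a b hab => Fin.rev_injective ((Tuple.sort q).injective hab)
  refine ⟨(univ.filter fun i : Fin k => (i : ℕ) < l).image σ, ?_, ?_⟩
  · rw [card_image_of_injective _ hσ, Fin.card_filter_val_lt, min_eq_right hl]
  · rw [sum_image fun a _ b _ h => hσ h]
    rfl

lemma majorizes_of_antitone {a b : Fin k → ℝ} (ha : Antitone a) (hsum : ∑ i, a i = ∑ i, b i)
    (hb : ∀ S : Finset (Fin k), S.Nonempty → ∑ i ∈ S, b i ≤ psum a #S) : Majorizes a b := by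
  refine ⟨hsum, fun l hl hlk => ?_⟩
  obtain ⟨S, rfl, hS⟩ := exists_card_eq_psum_descSort_eq_sum b hlk
  rw [descSort_eq_of_antitone ha, hS]
  exact hb S (card_pos.mp hl)

lemma psum_succ (a : Fin k → ℝ) {l : ℕ} (hl : l < k) :
    psum a (l + 1) = psum a l + a ⟨l, hl⟩ := by
  unfold psum
  rw [show (univ.filter fun i : Fin k => (i : ℕ) < l + 1)
      = insert ⟨l, hl⟩ (univ.filter fun i : Fin k => (i : ℕ) < l) by
    ext i
    simp only [mem_filter, mem_univ, true_and, mem_insert, Fin.ext_iff]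
    omega]
  rw [sum_insert (by simp), add_comm]

lemma psum_of_le (a : Fin k → ℝ) {l : ℕ} (hl : k ≤ l) : psum a l = ∑ i, a i := by
  unfold psum
  rw [filter_true_of_mem fun i _ => i.isLt.trans_le hl]

lemma sum_le_psum_card {p : Fin k → ℝ} (hp : Antitone p) (S : Finset (Fin k)) :
    ∑ i ∈ S, p i ≤ psum p #S := by
  induction S using Finset.induction_on_max with
  | empty => simp [psum]
  | insert a s hlt ih =>
    have ha : a ∉ s := fun h => (hlt a h).false
    have hcard : #s ≤ a := by
      simpa using card_le_card fun x hx => mem_Iio.mpr (hlt x hx)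
    have hsk : #s < k := hcard.trans_lt a.isLt
    rw [sum_insert ha, card_insert_of_notMem ha, psum_succ p hsk]
    have : p a ≤ p ⟨#s, hsk⟩ := hp (Fin.le_def.mpr hcard)
    linarith

lemma sum_sub_le_half_l1dist {p q : Fin k → ℝ} (hsum : ∑ i, p i = ∑ i, q i)
    (S : Finset (Fin k)) : ∑ i ∈ S, (q i - p i) ≤ l1dist p q / 2 :=
  calc ∑ i ∈ S, (q i - p i) ≤ ∑ i ∈ S, (q i - p i + |q i - p i|) / 2 :=
        sum_le_sum fun i _ => by linarith [le_abs_self (q i - p i)]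
    _ ≤ ∑ i, (q i - p i + |q i - p i|) / 2 :=
        sum_le_univ_sum_of_nonneg fun i => by linarith [neg_abs_le (q i - p i)]
    _ = l1dist p q / 2 := by
        rw [← sum_div, sum_add_distrib, sum_sub_distrib, hsum, sub_self, zero_add, l1dist]
        simp_rw [abs_sub_comm]

lemma sum_le_psum_card_add_half_l1dist {p q : Fin k → ℝ} (hp : Antitone p)
    (hsum : ∑ i, p i = ∑ i, q i) (S : Finset (Fin k)) :
    ∑ i ∈ S, q i ≤ psum p #S + l1dist p q / 2 := by
  have hsplit : ∑ i ∈ S, q i = ∑ i ∈ S, p i + ∑ i ∈ S, (q i - p i) := by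
    rw [← sum_add_distrib]; simp
  linarith [sum_le_psum_card hp S, sum_sub_le_half_l1dist hsum S]

lemma steepR_nonneg {δ : ℝ} (hδ : 0 ≤ δ) {p : Fin k → ℝ} (hp : ∀ i, 0 ≤ p i) (i : Fin k) :
    0 ≤ steepR δ p i := by
  unfold steepR
  split_ifs <;> linarith [hp i]

lemma steepR_antitone {δ : ℝ} (hδ : 0 ≤ δ) {p : Fin k → ℝ} (hp : Antitone p) :
    Antitone (steepR δ p) := by
  intro i j hij
  unfold steepR
  split_ifs with hj hi
  · rw [Fin.ext (hj.trans hi.symm)]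
  · omega
  · linarith [hp hij]
  · exact hp hij

lemma psum_steepR (δ : ℝ) (p : Fin k → ℝ) (hk : 0 < k) {l : ℕ} (hl : 1 ≤ l) :
    psum (steepR δ p) l = psum p l + δ / 2 := by
  have hstep : steepR δ p = fun i => p i + if i = ⟨0, hk⟩ then δ / 2 else 0 := by
    funext i; simp [steepR, Fin.ext_iff, apply_ite (p i + ·)]
  rw [psum, psum, hstep, sum_add_distrib, sum_ite_eq', if_pos (by simp; omega)]

lemma e1_antitone : Antitone (e1 k) := by
  intro i j hij
  have hij' : (i : ℕ) ≤ j := hij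
  unfold e1
  split_ifs <;> first | omega | norm_num

lemma psum_e1 (hk : 0 < k) {l : ℕ} (hl : 1 ≤ l) : psum (e1 k) l = 1 := by
  have he : e1 k = fun i => if i = ⟨0, hk⟩ then 1 else 0 := by
    funext i; simp [e1, Fin.ext_iff]
  rw [psum, he, sum_ite_eq', if_pos (by simp; omega)]

def truncateAt (r : Fin k → ℝ) (l : ℕ) : Fin k → ℝ := fun i =>
  if (i : ℕ) < l then r i else if (i : ℕ) = l then 1 - psum r l else 0

lemma psum_truncateAt_of_le (r : Fin k → ℝ) {l m : ℕ} (hm : m ≤ l) :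
    psum (truncateAt r l) m = psum r m :=
  sum_congr rfl fun _ hi => if_pos ((mem_filter.mp hi).2.trans_le hm)

lemma psum_truncateAt_of_lt (r : Fin k → ℝ) {l m : ℕ} (hlm : l < m) (hm : m ≤ k) :
    psum (truncateAt r l) m = 1 := by
  have hlk : l < k := hlm.trans_le hm
  have htail : psum (truncateAt r l) m = psum (truncateAt r l) (l + 1) := by
    refine (sum_subset (fun i hi => ?_) fun i hi hi' => ?_).symm
    · simp only [mem_filter, mem_univ, true_and] at hi ⊢; omega
    · simp only [mem_filter, mem_univ, true_and] at hi hi'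
      simp only [truncateAt]
      rw [if_neg (by omega), if_neg (by omega)]
  rw [htail, psum_succ _ hlk, psum_truncateAt_of_le r le_rfl]
  simp [truncateAt]

lemma min_psum_one_le_psum_truncateAt (r : Fin k → ℝ) (l : ℕ) {m : ℕ} (hm : m ≤ k) :
    min (psum r m) 1 ≤ psum (truncateAt r l) m := by
  rcases le_or_gt m l with hml | hlm
  · exact (psum_truncateAt_of_le r hml).symm ▸ min_le_left _ _
  · exact (psum_truncateAt_of_lt r hlm hm).symm ▸ min_le_right _ _

lemma truncateAt_antitone {r : Fin k → ℝ} {l : ℕ} (hr : Antitone r) (hr0 : ∀ i, 0 ≤ r i)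
    (hle : psum r l ≤ 1) (hgt : l < k → 1 < psum r (l + 1)) : Antitone (truncateAt r l) := by
  intro i j hij
  have hij' : (i : ℕ) ≤ j := hij
  rcases lt_trichotomy (j : ℕ) l with hj | hj | hj
  · simp only [truncateAt, if_pos hj, if_pos (hij'.trans_lt hj)]
    exact hr hij
  · have hlk : l < k := hj ▸ j.isLt
    have hrest := hgt hlk
    rw [psum_succ r hlk] at hrest
    have hrl : r ⟨l, hlk⟩ ≤ r i := hr (Fin.le_def.mpr (by simp; omega))
    simp only [truncateAt, if_neg hj.not_lt, if_pos hj]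
    split_ifs <;> first | linarith | omega
  · have hj0 : truncateAt r l j = 0 := by
      simp only [truncateAt]; rw [if_neg (by omega), if_neg (by omega)]
    rw [hj0]
    simp only [truncateAt]
    split_ifs <;> linarith [hr0 i]

lemma sum_truncateAt {r : Fin k → ℝ} {l : ℕ} (hl : l ≤ k) (h : l < k ∨ psum r l = 1) :
    ∑ i, truncateAt r l i = 1 := by
  rw [← psum_of_le _ le_rfl]
  rcases hl.lt_or_eq with hlk | rfl
  · exact psum_truncateAt_of_lt r hlk le_rfl
  · rw [psum_truncateAt_of_le r le_rfl, h.resolve_left (lt_irrefl _)]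

end

/-- the steepest `δ`-approximation of `p` majorizes every probability
distribution `p'` with `‖p − p'‖ ≤ δ`. -/
theorem steepest_majorizes {k : ℕ} (δ : ℝ) (hδ : 0 ≤ δ)
    (p : Fin k → ℝ) (hp : IsProbDist p) (hord : Antitone p)
    (pbar : Fin k → ℝ) (hpbar : IsSteepest δ p pbar)
    (p' : Fin k → ℝ) (hp' : IsProbDist p') (hdist : l1dist p p' ≤ δ) :
    Majorizes pbar p' := by
  have hk : 0 < k := Nat.pos_of_ne_zero fun h => by subst h; simp [IsProbDist] at hp'
  have hbound (S : Finset (Fin k)) : ∑ i ∈ S, p' i ≤ min (psum p #S + δ / 2) 1 := by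
    refine le_min ?_ (hp'.2 ▸ sum_le_univ_sum_of_nonneg fun i => hp'.1 i)
    linarith [sum_le_psum_card_add_half_l1dist hord (hp.2.trans hp'.2.symm) S]
  rcases hpbar with ⟨-, rfl⟩ | ⟨-, l, ⟨-, hlk, hle, hgt⟩, hdef⟩
  · refine majorizes_of_antitone e1_antitone ?_ fun S hS => ?_
    · rw [← psum_of_le _ le_rfl, psum_e1 hk hk, hp'.2]
    · rw [psum_e1 hk (card_pos.mpr hS)]
      exact (hbound S).trans (min_le_right _ _)
  · obtain rfl : pbar = truncateAt (steepR δ p) l := funext hdef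
    have hr : Antitone (steepR δ p) := steepR_antitone hδ hord
    refine majorizes_of_antitone (truncateAt_antitone hr (steepR_nonneg hδ hp.1) hle hgt)
      ?_ fun S hS => ?_
    · -- if no truncation happens, then `1 + δ/2 ≤ 1` forces `δ = 0`
      refine hp'.2 ▸ sum_truncateAt hlk (hlk.lt_or_eq.imp_right fun hl => ?_)
      rw [hl, psum_steepR δ p hk hk, psum_of_le p le_rfl, hp.2] at hle ⊢
      linarith
    · have hS' := hbound S
      rw [← psum_steepR δ p hk (card_pos.mpr hS)] at hS'
      exact hS'.trans (min_psum_one_le_psum_truncateAt _ l (by simpa using card_le_univ S))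
end

section
/- Let p be a probability distribution on k elements with non-increasingly ordered entries, let δ ≥ 0, and let p̲^(δ) be the flattest δ-approximation of p. Then for every probability distribution p' on k elements with ‖p − p'‖ ≤ δ, we have p' ≻ p̲^(δ). -/
open Finset

/-!
Two vectors with equal sums satisfy `a ≻ b` as soon as `Σᵢ (bᵢ - t)⁺ ≤ Σᵢ (aᵢ - t)⁺` for every
level `t`, because the sum of the `l` largest entries of `a` is `min_t (l t + Σᵢ (aᵢ - t)⁺)`,
the minimum being attained at the `l`-th largest entry.

The flattest approximation takes values in `[y*, x*]`, so at a level `t ∉ (y*, x*)` its excess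
`Σᵢ (p̲ᵢ - t)⁺` is `max(0, 1 - k t)`, the least excess of any probability vector. For
`y* ≤ t ≤ x*` it is the excess of `p` minus `ε(x*) = δ/2`, while passing from `p` to `p'`
lowers the excess by at most `‖p - p'‖/2 ≤ δ/2`.
-/

def excess {k : ℕ} (a : Fin k → ℝ) (t : ℝ) : ℝ := ∑ i, (a i - t)⁺

section Excess

variable {k : ℕ}

lemma excess_antitone (a : Fin k → ℝ) : Antitone (excess a) :=
  fun _ _ hst => sum_le_sum fun _ _ => posPart_mono (by linarith)

lemma sum_sub_mul_le_excess (a : Fin k → ℝ) (t : ℝ) : ∑ i, a i - k * t ≤ excess a t := by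
  have h : ∑ i, (a i - t) ≤ excess a t := sum_le_sum fun i _ => le_posPart _
  simpa [sum_sub_distrib] using h

lemma excess_eq_of_forall_le {a : Fin k → ℝ} {t : ℝ} (h : ∀ i, t ≤ a i) :
    excess a t = ∑ i, a i - k * t := by
  simp [excess, posPart_eq_self.2 (sub_nonneg.2 (h _)), sum_sub_distrib]

lemma excess_eq_zero_of_forall_le {a : Fin k → ℝ} {t : ℝ} (h : ∀ i, a i ≤ t) :
    excess a t = 0 :=
  sum_eq_zero fun i _ => posPart_eq_zero.2 (sub_nonpos.2 (h i))

lemma excess_le_of_sum_eq {a b : Fin k → ℝ} {t : ℝ} (hsum : ∑ i, b i = ∑ i, a i)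
    (ht : (∀ i, t ≤ b i) ∨ ∀ i, b i ≤ t) : excess b t ≤ excess a t := by
  rcases ht with ht | ht
  · rw [excess_eq_of_forall_le ht, hsum]
    exact sum_sub_mul_le_excess a t
  · rw [excess_eq_zero_of_forall_le ht]
    exact sum_nonneg fun i _ => posPart_nonneg _

lemma l1dist_comm (a b : Fin k → ℝ) : l1dist a b = l1dist b a := by
  simp only [l1dist, abs_sub_comm]

lemma sum_posPart_sub_eq_half_l1dist {a b : Fin k → ℝ} (h : ∑ i, a i = ∑ i, b i) :
    ∑ i, (a i - b i)⁺ = l1dist a b / 2 := by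
  have hpos : ∀ x : ℝ, x⁺ = (|x| + x) / 2 := fun x => by
    linarith [posPart_add_negPart x, posPart_sub_negPart x]
  simp only [hpos, ← sum_div, sum_add_distrib, sum_sub_distrib, h, sub_self, add_zero, l1dist]

lemma excess_le_excess_add_half_l1dist {a b : Fin k → ℝ} (h : ∑ i, a i = ∑ i, b i) (t : ℝ) :
    excess a t ≤ excess b t + l1dist a b / 2 := by
  rw [← sum_posPart_sub_eq_half_l1dist h, excess, excess, ← sum_add_distrib]
  refine sum_le_sum fun i _ => ?_
  rw [posPart_def]
  exact sup_le (by linarith [le_posPart (b i - t), le_posPart (a i - b i)]) (by positivity)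

end Excess

section Majorization

variable {k : ℕ}

lemma sum_comp_descSort (a : Fin k → ℝ) (g : ℝ → ℝ) :
    ∑ i, g (descSort a i) = ∑ i, g (a i) :=
  (Fin.revPerm.trans (Tuple.sort a)).sum_comp (fun j => g (a j))

lemma descSort_antitone (a : Fin k → ℝ) : Antitone (descSort a) :=
  fun _ _ hij => Tuple.monotone_sort a (Fin.rev_le_rev.mpr hij)

lemma excess_descSort (a : Fin k → ℝ) (t : ℝ) : excess (descSort a) t = excess a t :=
  sum_comp_descSort a (fun c => (c - t)⁺)

lemma psum_le_mul_add_excess {l : ℕ} (hlk : l ≤ k) (a : Fin k → ℝ) (t : ℝ) :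
    psum a l ≤ l * t + excess a t := by
  calc psum a l
      ≤ ∑ i ∈ univ.filter (fun i : Fin k => (i : ℕ) < l), (t + (a i - t)⁺) :=
        sum_le_sum fun i _ => by linarith [le_posPart (a i - t)]
    _ = l * t + ∑ i ∈ univ.filter (fun i : Fin k => (i : ℕ) < l), (a i - t)⁺ := by
        rw [sum_add_distrib, sum_const, Fin.card_filter_val_lt, min_eq_right hlk, nsmul_eq_mul]
    _ ≤ l * t + excess a t := by
        gcongr
        exact sum_le_sum_of_subset_of_nonneg (subset_univ _) fun i _ _ => posPart_nonneg _

lemma psum_eq_mul_add_excess {a : Fin k → ℝ} (ha : Antitone a) {l : ℕ} (hl : 1 ≤ l)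
    (hlk : l ≤ k) : psum a l = l * a ⟨l - 1, by omega⟩ + excess a (a ⟨l - 1, by omega⟩) := by
  set t := a ⟨l - 1, by omega⟩
  have htop : ∀ i : Fin k, (i : ℕ) < l → (a i - t)⁺ = a i - t := fun i hi =>
    posPart_eq_self.2 (sub_nonneg.2 (ha (Fin.le_def.2 (by dsimp only; omega))))
  have hbot : ∀ i : Fin k, ¬ (i : ℕ) < l → (a i - t)⁺ = 0 := fun i hi =>
    posPart_eq_zero.2 (sub_nonpos.2 (ha (Fin.le_def.2 (by dsimp only; omega))))
  rw [excess, ← sum_filter_add_sum_filter_not univ (fun i : Fin k => (i : ℕ) < l),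
    sum_congr rfl fun i hi => htop i (mem_filter.1 hi).2,
    sum_congr rfl fun i hi => hbot i (mem_filter.1 hi).2, sum_const_zero, add_zero,
    sum_sub_distrib, sum_const, Fin.card_filter_val_lt, min_eq_right hlk, nsmul_eq_mul, psum]
  ring

lemma majorizes_of_excess_le {a b : Fin k → ℝ} (hsum : ∑ i, a i = ∑ i, b i)
    (h : ∀ t, excess b t ≤ excess a t) : Majorizes a b := by
  refine ⟨hsum, fun l hl hlk => ?_⟩
  obtain ⟨t, ht⟩ : ∃ t, psum (descSort a) l = l * t + excess (descSort a) t :=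
    ⟨_, psum_eq_mul_add_excess (descSort_antitone a) hl hlk⟩
  calc psum (descSort b) l ≤ l * t + excess (descSort b) t := psum_le_mul_add_excess hlk _ _
    _ ≤ l * t + excess (descSort a) t := by
        simp only [excess_descSort]
        gcongr
        exact h t
    _ = psum (descSort a) l := ht.symm

end Majorization

section Flattest

variable {k : ℕ} {δ : ℝ} {p pflat : Fin k → ℝ}

lemma IsProbDist.dim_ne_zero (hp : IsProbDist p) : k ≠ 0 := by
  rintro rfl
  simpa using hp.2

lemma sum_unif (hk : k ≠ 0) : ∑ i, unif k i = 1 := by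
  simp [unif, hk]

lemma epsFn_eq_excess (p : Fin k → ℝ) (x : ℝ) : epsFn p x = excess p x := by
  rw [epsFn, sum_filter]
  refine sum_congr rfl fun i _ => ?_
  split_ifs with h
  · exact (posPart_eq_self.2 (sub_nonneg.2 h)).symm
  · exact (posPart_eq_zero.2 (by linarith)).symm

lemma gammaFn_eq_sum_posPart (p : Fin k → ℝ) (y : ℝ) : gammaFn p y = ∑ i, (y - p i)⁺ := by
  rw [gammaFn, sum_filter]
  refine sum_congr rfl fun i _ => ?_
  split_ifs with h
  · exact (posPart_eq_self.2 (sub_nonneg.2 h)).symm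
  · exact (posPart_eq_zero.2 (by linarith)).symm

lemma gammaFn_monotone (p : Fin k → ℝ) : Monotone (gammaFn p) := fun _ _ hyy' => by
  simp only [gammaFn_eq_sum_posPart]
  exact sum_le_sum fun _ _ => posPart_mono (by linarith)

/-- Far from uniform, `ε` and `γ` both exceed `δ/2` at the uniform level `1/k`. -/
lemma filling_le_cutting (hp : IsProbDist p) (hfar : δ < l1dist p (unif k)) {x y : ℝ}
    (hx : epsFn p x = δ / 2) (hy : gammaFn p y = δ / 2) : y ≤ x := by
  have hsum : ∑ i, p i = ∑ i, unif k i := by rw [hp.2, sum_unif hp.dim_ne_zero]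
  have heps : epsFn p (k : ℝ)⁻¹ = l1dist p (unif k) / 2 := by
    rw [epsFn_eq_excess, ← sum_posPart_sub_eq_half_l1dist hsum]
    rfl
  have hgamma : gammaFn p (k : ℝ)⁻¹ = l1dist p (unif k) / 2 := by
    rw [gammaFn_eq_sum_posPart, l1dist_comm, ← sum_posPart_sub_eq_half_l1dist hsum.symm]
    rfl
  have hxk : (k : ℝ)⁻¹ < x := lt_of_not_ge fun hxk => by
    linarith [excess_antitone p hxk, epsFn_eq_excess p x, epsFn_eq_excess p (k : ℝ)⁻¹]
  have hyk : y < (k : ℝ)⁻¹ := lt_of_not_ge fun hyk => by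
    linarith [gammaFn_monotone p hyk]
  linarith

namespace IsFlattestWith

variable {x y : ℝ} (h : IsFlattestWith δ p pflat x y)
include h

lemma mem_Icc (hyx : y ≤ x) (i : Fin k) : pflat i ∈ Set.Icc y x := by
  obtain ⟨-, -, -, -, hflat⟩ := h
  rw [hflat i]
  constructor <;> split_ifs <;> linarith

lemma sum_eq (hyx : y ≤ x) : ∑ i, pflat i = ∑ i, p i := by
  obtain ⟨-, -, hx, hy, hflat⟩ := h
  have hdiff : ∀ i, pflat i - p i =
      (if p i ≤ y then y - p i else 0) - (if x ≤ p i then p i - x else 0) := fun i => by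
    rw [hflat i]
    split_ifs <;> linarith
  have hzero : ∑ i, (pflat i - p i) = 0 := by
    rw [sum_congr rfl fun i _ => hdiff i, sum_sub_distrib, ← sum_filter, ← sum_filter,
      ← gammaFn, ← epsFn, hy, hx, sub_self]
  rwa [sum_sub_distrib, sub_eq_zero] at hzero

/-- Between the two levels only the cut above `x*` is visible in the excess. -/
lemma excess_eq {t : ℝ} (hyt : y ≤ t) (htx : t ≤ x) :
    excess pflat t = excess p t - δ / 2 := by
  obtain ⟨-, -, hx, -, hflat⟩ := h
  have hdiff : ∀ i, (p i - t)⁺ - (pflat i - t)⁺ = if x ≤ p i then p i - x else 0 := fun i => by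
    rw [hflat i]
    split_ifs
    · rw [posPart_eq_self.2 (by linarith), posPart_eq_self.2 (by linarith)]
      ring
    · rw [posPart_eq_zero.2 (by linarith), posPart_eq_zero.2 (by linarith)]
      ring
    · ring
  have hcut : excess p t - excess pflat t = epsFn p x := by
    rw [excess, excess, ← sum_sub_distrib, sum_congr rfl fun i _ => hdiff i, epsFn, sum_filter]
  linarith

end IsFlattestWith

namespace IsFlattest

variable (hp : IsProbDist p) (h : IsFlattest δ p pflat)
include hp h

lemma sum_eq_one : ∑ i, pflat i = 1 := by
  rcases h with ⟨-, rfl⟩ | ⟨hfar, x, y, hflat⟩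
  · exact sum_unif hp.dim_ne_zero
  · rw [hflat.sum_eq (filling_le_cutting hp hfar hflat.2.2.1 hflat.2.2.2.1), hp.2]

lemma excess_le {p' : Fin k → ℝ} (hp' : IsProbDist p') (hdist : l1dist p p' ≤ δ) (t : ℝ) :
    excess pflat t ≤ excess p' t := by
  have hsum : ∑ i, pflat i = ∑ i, p' i := by rw [sum_eq_one hp h, hp'.2]
  rcases h with ⟨-, rfl⟩ | ⟨hfar, x, y, hflat⟩
  · exact excess_le_of_sum_eq hsum ((le_total t (k : ℝ)⁻¹).imp (fun ht _ => ht) fun ht _ => ht)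
  have hyx := filling_le_cutting hp hfar hflat.2.2.1 hflat.2.2.2.1
  by_cases hty : t ≤ y
  · exact excess_le_of_sum_eq hsum (Or.inl fun i => hty.trans (hflat.mem_Icc hyx i).1)
  by_cases hxt : x ≤ t
  · exact excess_le_of_sum_eq hsum (Or.inr fun i => (hflat.mem_Icc hyx i).2.trans hxt)
  calc excess pflat t = excess p t - δ / 2 := hflat.excess_eq (by linarith) (by linarith)
    _ ≤ excess p' t + l1dist p p' / 2 - δ / 2 := by
        gcongr
        exact excess_le_excess_add_half_l1dist (by rw [hp.2, hp'.2]) t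
    _ ≤ excess p' t := by linarith

end IsFlattest

end Flattest

theorem flattest_is_majorized_general {k : ℕ} (δ : ℝ)
    (p : Fin k → ℝ) (hp : IsProbDist p)
    (pflat : Fin k → ℝ) (hpflat : IsFlattest δ p pflat)
    (p' : Fin k → ℝ) (hp' : IsProbDist p') (hdist : l1dist p p' ≤ δ) :
    Majorizes p' pflat :=
  majorizes_of_excess_le (by rw [hp'.2, hpflat.sum_eq_one hp])
    (hpflat.excess_le hp hp' hdist)

/-- the flattest `δ`-approximation of `p` is majorized by every probability
distribution `p'` with `‖p − p'‖ ≤ δ`. -/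
theorem flattest_is_majorized {k : ℕ} (δ : ℝ) (hδ : 0 ≤ δ)
    (p : Fin k → ℝ) (hp : IsProbDist p) (hord : Antitone p)
    (pflat : Fin k → ℝ) (hpflat : IsFlattest δ p pflat)
    (p' : Fin k → ℝ) (hp' : IsProbDist p') (hdist : l1dist p p' ≤ δ) :
    Majorizes p' pflat :=
  flattest_is_majorized_general δ p hp pflat hpflat p' hp' hdist
end
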